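/- Let X be a pointed topological space, α a path from x₀ to x₁, and h_α : π₁(X,x₁) → π₁(X,x₀) the isomorphism [β] ↦ [α ∗ β ∗ α⁻¹]. Then h_α is continuous with respect to the whisker topologies if and only if for every neighborhood U of x₀ there is a neighborhood V of x₁ such that for every loop β in V based at x₁, the loop α ∗ β ∗ α⁻¹ is path-homotopic to a loop contained in U. -/

import Mathlib

open Set
open scoped unitInterval

attribute [local instance] Path.Homotopic.setoid

section Aux
variable {X : Type*} [TopologicalSpace X]

local notation:70 x " ⬝ " y => Path.Homotopic.Quotient.trans x y

theorem Path.Homotopic.comp_lift {a b c : X} (P₀ : Path a b) (P₁ : Path b c) :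
    ((Path.Homotopic.Quotient.mk (P₀.trans P₁)) : Path.Homotopic.Quotient a c) = ((Path.Homotopic.Quotient.mk P₀) : Path.Homotopic.Quotient a b) ⬝ ((Path.Homotopic.Quotient.mk P₁) : Path.Homotopic.Quotient b c) :=
  rfl

lemma qassoc {a b c d : X} (x : Path.Homotopic.Quotient a b) (y : Path.Homotopic.Quotient b c)
    (z : Path.Homotopic.Quotient c d) : ((x ⬝ y) ⬝ z) = x ⬝ (y ⬝ z) := by
  induction x using Path.Homotopic.Quotient.ind
  induction y using Path.Homotopic.Quotient.ind
  induction z using Path.Homotopic.Quotient.ind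
  rw [← Path.Homotopic.comp_lift, ← Path.Homotopic.comp_lift, ← Path.Homotopic.comp_lift,
    ← Path.Homotopic.comp_lift]
  exact Quotient.sound ⟨Path.Homotopy.transAssoc _ _ _⟩

lemma qrefl_comp {a b : X} (x : Path.Homotopic.Quotient a b) :
    (((Path.Homotopic.Quotient.mk (Path.refl a)) : Path.Homotopic.Quotient a a) ⬝ x) = x := by
  induction x using Path.Homotopic.Quotient.ind
  rw [← Path.Homotopic.comp_lift]
  exact Quotient.sound ⟨Path.Homotopy.reflTrans _⟩

lemma qcomp_refl {a b : X} (x : Path.Homotopic.Quotient a b) :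
    (x ⬝ ((Path.Homotopic.Quotient.mk (Path.refl b)) : Path.Homotopic.Quotient b b)) = x := by
  induction x using Path.Homotopic.Quotient.ind
  rw [← Path.Homotopic.comp_lift]
  exact Quotient.sound ⟨Path.Homotopy.transRefl _⟩

lemma qcomp_symm {a b : X} (p : Path a b) :
    (((Path.Homotopic.Quotient.mk p) : Path.Homotopic.Quotient a b) ⬝ ((Path.Homotopic.Quotient.mk p.symm) : Path.Homotopic.Quotient b a)) =
      ((Path.Homotopic.Quotient.mk (Path.refl a)) : Path.Homotopic.Quotient a a) := by
  rw [← Path.Homotopic.comp_lift]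
  exact (Quotient.sound (⟨Path.Homotopy.reflTransSymm p⟩ : (Path.refl a).Homotopic (p.trans p.symm))).symm

lemma qsymm_comp {a b : X} (p : Path a b) :
    (((Path.Homotopic.Quotient.mk p.symm) : Path.Homotopic.Quotient b a) ⬝ ((Path.Homotopic.Quotient.mk p) : Path.Homotopic.Quotient a b)) =
      ((Path.Homotopic.Quotient.mk (Path.refl b)) : Path.Homotopic.Quotient b b) := by
  have := qcomp_symm p.symm
  rwa [Path.symm_symm] at this

end Aux



/-- The whisker topology on `π₁(X,x)`: basic open sets are
`B(a,U) = { a·[γ] : γ a loop at x contained in the open neighborhood U of x }`. -/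
def whiskerTop {X : Type*} [TopologicalSpace X] (x : X) :
    TopologicalSpace (Path.Homotopic.Quotient x x) :=
  TopologicalSpace.generateFrom
    {S | ∃ (a : Path.Homotopic.Quotient x x) (U : Set X), IsOpen U ∧ x ∈ U ∧
      S = {b | ∃ γ : Path x x, Set.range γ ⊆ U ∧ b = a.trans (Path.Homotopic.Quotient.mk γ)}}

/-- The homomorphism `h_α : π₁(X,x₁) → π₁(X,x₀)`, `[β] ↦ [α ∗ β ∗ α⁻¹]`, induced by a
path `α` from `x₀` to `x₁`. -/
noncomputable def hAlpha {X : Type*} [TopologicalSpace X] {x₀ x₁ : X} (α : Path x₀ x₁) :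
    Path.Homotopic.Quotient x₁ x₁ → Path.Homotopic.Quotient x₀ x₀ :=
  Quotient.map (fun β => (α.trans β).trans α.symm)
    fun _ _ h => ((Path.Homotopic.refl α).hcomp h).hcomp (Path.Homotopic.refl α.symm)

section Main
variable {X : Type*} [TopologicalSpace X]

local notation:70 x " ⬝ " y => Path.Homotopic.Quotient.trans x y

lemma hAlpha_mk' {x₀ x₁ : X} (α : Path x₀ x₁) (β : Path x₁ x₁) :
    hAlpha α (Path.Homotopic.Quotient.mk β) = (((Path.Homotopic.Quotient.mk α) : Path.Homotopic.Quotient x₀ x₁) ⬝ ((Path.Homotopic.Quotient.mk β) : Path.Homotopic.Quotient x₁ x₁))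
      ⬝ ((Path.Homotopic.Quotient.mk α.symm) : Path.Homotopic.Quotient x₁ x₀) := rfl

lemma hAlpha_one {x₀ x₁ : X} (α : Path x₀ x₁) :
    hAlpha α (Path.Homotopic.Quotient.mk (Path.refl x₁)) = ((Path.Homotopic.Quotient.mk (Path.refl x₀)) : Path.Homotopic.Quotient x₀ x₀) := by
  rw [hAlpha_mk', qcomp_refl, qcomp_symm]

lemma hAlpha_comp {x₀ x₁ : X} (α : Path x₀ x₁) (c : Path.Homotopic.Quotient x₁ x₁)
    (β : Path x₁ x₁) :
    hAlpha α (c ⬝ ((Path.Homotopic.Quotient.mk β) : Path.Homotopic.Quotient x₁ x₁)) = (hAlpha α c) ⬝ (hAlpha α (Path.Homotopic.Quotient.mk β)) := by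
  induction c using Path.Homotopic.Quotient.ind with
  | mk p =>
    have hpb : ((((Path.Homotopic.Quotient.mk p) : Path.Homotopic.Quotient x₁ x₁)) ⬝ (Path.Homotopic.Quotient.mk β)) = (Path.Homotopic.Quotient.mk (p.trans β)) := rfl
    rw [hpb, hAlpha_mk', hAlpha_mk', hAlpha_mk', Path.Homotopic.comp_lift p β]
    simp only [qassoc]
    rw [← qassoc ((Path.Homotopic.Quotient.mk α.symm) : Path.Homotopic.Quotient x₁ x₀) ((Path.Homotopic.Quotient.mk α) : Path.Homotopic.Quotient x₀ x₁),
      qsymm_comp, qrefl_comp]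

lemma basic_mem_self {x : X} (c : Path.Homotopic.Quotient x x) {U : Set X} (hxU : x ∈ U) :
    c ∈ {b | ∃ γ : Path x x, Set.range γ ⊆ U ∧ b = c ⬝ (Path.Homotopic.Quotient.mk γ)} := by
  refine ⟨Path.refl x, ?_, (qcomp_refl c).symm⟩
  rw [Path.refl_range]; exact Set.singleton_subset_iff.mpr hxU

/-- Basis property of the whisker topology. -/
lemma exists_basic {x : X} {S : Set (Path.Homotopic.Quotient x x)}
    (hS : @IsOpen _ (whiskerTop x) S) :
    ∀ c ∈ S, ∃ U : Set X, IsOpen U ∧ x ∈ U ∧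
      {b | ∃ γ : Path x x, Set.range γ ⊆ U ∧ b = c ⬝ (Path.Homotopic.Quotient.mk γ)} ⊆ S := by
  induction hS with
  | basic s hs =>
    obtain ⟨a, U, hU, hxU, rfl⟩ := hs
    rintro c ⟨γ₀, hγ₀, rfl⟩
    refine ⟨U, hU, hxU, ?_⟩
    rintro b ⟨γ, hγ, rfl⟩
    refine ⟨γ₀.trans γ, ?_, ?_⟩
    · rw [Path.trans_range]; exact Set.union_subset hγ₀ hγ
    · rw [Path.Homotopic.comp_lift, qassoc]
  | univ => exact fun c _ => ⟨Set.univ, isOpen_univ, trivial, fun _ _ => trivial⟩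
  | inter s t _ _ ihs iht =>
    rintro c ⟨hcs, hct⟩
    obtain ⟨U₁, hU₁, hx₁, h₁⟩ := ihs c hcs
    obtain ⟨U₂, hU₂, hx₂, h₂⟩ := iht c hct
    refine ⟨U₁ ∩ U₂, hU₁.inter hU₂, ⟨hx₁, hx₂⟩, ?_⟩
    rintro b ⟨γ, hγ, rfl⟩
    exact ⟨h₁ ⟨γ, hγ.trans Set.inter_subset_left, rfl⟩,
      h₂ ⟨γ, hγ.trans Set.inter_subset_right, rfl⟩⟩
  | sUnion 𝒮 _ ih =>
    rintro c ⟨s, hs, hcs⟩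
    obtain ⟨U, hU, hxU, h⟩ := ih s hs c hcs
    exact ⟨U, hU, hxU, h.trans (Set.subset_sUnion_of_mem hs)⟩

end Main


/-- `h_α` is continuous for the whisker topologies if and only if for every neighborhood
`U` of `x₀` there is a neighborhood `V` of `x₁` such that for every loop `β` in `V` based
at `x₁`, the loop `α ∗ β ∗ α⁻¹` is path-homotopic to a loop contained in `U`. -/
theorem stmt_9 {X : Type*} [TopologicalSpace X] {x₀ x₁ : X} (α : Path x₀ x₁) :
    @Continuous _ _ (whiskerTop x₁) (whiskerTop x₀) (hAlpha α) ↔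
    (∀ U : Set X, IsOpen U → x₀ ∈ U → ∃ V : Set X, IsOpen V ∧ x₁ ∈ V ∧
      ∀ β : Path x₁ x₁, Set.range β ⊆ V →
        ∃ γ : Path x₀ x₀, Set.range γ ⊆ U ∧ ((α.trans β).trans α.symm).Homotopic γ) := by
  constructor
  · intro hcont U hU hxU
    set S : Set (Path.Homotopic.Quotient x₀ x₀) :=
      {b | ∃ γ : Path x₀ x₀, Set.range γ ⊆ U ∧
        b = Path.Homotopic.Quotient.trans ((Path.Homotopic.Quotient.mk (Path.refl x₀))) (Path.Homotopic.Quotient.mk γ)} with hSdef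
    have hS : @IsOpen _ (whiskerTop x₀) S :=
      TopologicalSpace.GenerateOpen.basic _ ⟨(Path.Homotopic.Quotient.mk (Path.refl x₀)), U, hU, hxU, rfl⟩
    have hP : @IsOpen _ (whiskerTop x₁) (hAlpha α ⁻¹' S) :=
      @IsOpen.preimage _ _ (whiskerTop x₁) (whiskerTop x₀) _ hcont S hS
    have hmem : ((Path.Homotopic.Quotient.mk (Path.refl x₁)) : Path.Homotopic.Quotient x₁ x₁) ∈ hAlpha α ⁻¹' S := by
      show hAlpha α (Path.Homotopic.Quotient.mk (Path.refl x₁)) ∈ S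
      rw [hAlpha_one]
      exact basic_mem_self _ hxU
    obtain ⟨V, hV, hxV, hsub⟩ := exists_basic hP _ hmem
    refine ⟨V, hV, hxV, fun β hβ => ?_⟩
    have hb : (Path.Homotopic.Quotient.trans ((Path.Homotopic.Quotient.mk (Path.refl x₁))) (Path.Homotopic.Quotient.mk β)) ∈ hAlpha α ⁻¹' S :=
      hsub ⟨β, hβ, rfl⟩
    rw [Set.mem_preimage, qrefl_comp] at hb
    obtain ⟨γ, hγ, heq⟩ := hb
    rw [qrefl_comp] at heq
    exact ⟨γ, hγ, Quotient.exact heq⟩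
  · intro h
    rw [show whiskerTop x₀ = TopologicalSpace.generateFrom _ from rfl]
    rw [@continuous_generateFrom_iff _ _ (hAlpha α) (whiskerTop x₁) _]
    rintro s ⟨a, U, hU, hxU, rfl⟩
    obtain ⟨V, hV, hxV, hh⟩ := h U hU hxU
    letI := whiskerTop x₁
    rw [isOpen_iff_forall_mem_open]
    rintro c hc
    obtain ⟨γ₀, hγ₀, hceq⟩ := hc
    refine ⟨{b | ∃ γ : Path x₁ x₁, Set.range γ ⊆ V ∧ b = Path.Homotopic.Quotient.trans c (Path.Homotopic.Quotient.mk γ)},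
      ?_, ?_, basic_mem_self c hxV⟩
    · rintro b ⟨β, hβ, rfl⟩
      obtain ⟨γ', hγ', hhom⟩ := hh β hβ
      rw [Set.mem_preimage]
      rw [hAlpha_comp, hceq, hAlpha_mk', ← Path.Homotopic.comp_lift, ← Path.Homotopic.comp_lift,
        Path.Homotopic.Quotient.eq.mpr hhom, qassoc]
      exact ⟨γ₀.trans γ', by rw [Path.trans_range]; exact Set.union_subset hγ₀ hγ', rfl⟩
    · exact TopologicalSpace.GenerateOpen.basic _ ⟨c, V, hV, hxV, rfl⟩
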